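/- Let A be a k×r integer matrix, B = {b₁,...,bₙ} a basis of the integral kernel of A, and suppose B has norm N (i.e., the saturation of I_B with respect to x₁⋯x_r admits a pure-binomial generating set in which each generator is a signed sum of at most N monomial multiples of the generators x^{b_i⁺} - x^{b_i⁻}). For u ∈ ℕ^r, form the graph on F(u) = {v ∈ ℕ^r : Av = Au} with an edge between v₁ and v₂ iff v₁ - v₂ = Σ_{i=1}^n a_i b_i for some integers a_i with Σ_i |a_i| ≤ N. Then this graph is connected. -/

import Mathlib

open MvPolynomial

noncomputable def xpow {r : ℕ} (d : Fin r → ℕ) : MvPolynomial (Fin r) ℤ :=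
  ∏ j, X j ^ d j

def posPart {r : ℕ} (b : Fin r → ℤ) : Fin r → ℕ := fun j => (b j).toNat
def negPart {r : ℕ} (b : Fin r → ℤ) : Fin r → ℕ := fun j => (-(b j)).toNat

/-!
Two points `v, w` of the fibre differ by an integer combination of the `bᵢ`. The exponent
differences `c` for which some monomial multiple of a binomial with exponent difference `c` lies
in `I_B` form a group containing every `bᵢ`, so `x^v - x^w` lies in the saturation of `I_B`, that
is, in the ideal generated by `G`. Each generator `x^p - x^q ∈ G` is a signed sum of at most `N`
monomial multiples of the `x^{bᵢ⁺} - x^{bᵢ⁻}`; applying `∂/∂xⱼ` and evaluating at `(1, …, 1)`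
shows that `p - q` is a combination of the `bᵢ` with `Σ |aᵢ| ≤ N`, i.e. a move.

Moves form a translation-invariant relation on `ℕ^r`, so connectivity by moves is an additive
congruence `~`, and `x^d ↦ [d]` is a ring map `ℤ[x] → ℤ[ℕ^r / ~]` killing `G`. It therefore kills
`x^v - x^w`, which says that `v ~ w`. Moves stay in the fibre because the `bᵢ` lie in `ker A`.
-/

def AddCon.reflTransGen {M : Type*} [AddCommMonoid M] (r : M → M → Prop)
    (hsymm : ∀ a b, r a b → r b a) (hadd : ∀ a b c, r a b → r (a + c) (b + c)) : AddCon M where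
  r := Relation.ReflTransGen r
  iseqv :=
    haveI : Std.Symm r := ⟨hsymm⟩
    ⟨fun _ => .refl, fun h => Std.Symm.symm _ _ h, .trans⟩
  add' {a b c d} hab hcd :=
    (hab.lift (· + c) fun x y h => hadd x y c h).trans
      (hcd.lift (b + ·) fun x y h => by simpa only [add_comm b] using hadd x y b h)

lemma Relation.ReflTransGen.restrict {α : Type*} {r : α → α → Prop} {F : Set α}
    (hF : ∀ x y, r x y → x ∈ F → y ∈ F) {x y : α} (h : ReflTransGen r x y) (hx : x ∈ F) :
    ReflTransGen (fun x y => x ∈ F ∧ y ∈ F ∧ x ≠ y ∧ r x y) x y := by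
  induction h using Relation.ReflTransGen.head_induction_on with
  | refl => exact .refl
  | @head x z hxz _ ih =>
    have hz := hF x z hxz hx
    by_cases hxz' : x = z
    · exact hxz' ▸ ih hz
    · exact .head ⟨hx, hz, hxz', hxz⟩ (ih hz)

theorem AddMonoidHom.eq_of_monomial_sub_mem_span {σ R M : Type*} [CommRing R] [Nontrivial R]
    [AddCommMonoid M] (f : (σ →₀ ℕ) →+ M) {G : Set (MvPolynomial σ R)}
    (hG : ∀ g ∈ G, ∃ p q, f p = f q ∧ g = monomial p 1 - monomial q 1) {v w : σ →₀ ℕ}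
    (h : monomial v (1 : R) - monomial w 1 ∈ Ideal.span G) : f v = f w := by
  let φ := AddMonoidAlgebra.mapDomainRingHom R f
  have hφ (d : σ →₀ ℕ) : φ (monomial d 1) = AddMonoidAlgebra.single (f d) 1 :=
    AddMonoidAlgebra.mapDomain_single
  have hker : Ideal.span G ≤ RingHom.ker φ := Ideal.span_le.2 fun g hg => by
    obtain ⟨p, q, hpq, rfl⟩ := hG g hg
    simp [hφ, hpq]
  have := hker h
  rw [RingHom.mem_ker, map_sub, hφ, hφ, sub_eq_zero] at this
  exact AddMonoidAlgebra.single_left_injective one_ne_zero this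

def intDiff {ι : Type*} (u v : ι → ℕ) : ι → ℤ := fun j => (u j : ℤ) - v j

def DiffIn {ι : Type*} (S : Set (ι → ℤ)) (v w : ι → ℕ) : Prop := intDiff v w ∈ S

lemma diffIn_add_right {ι : Type*} {S : Set (ι → ℤ)} {v w : ι → ℕ} (c : ι → ℕ)
    (h : DiffIn S v w) : DiffIn S (v + c) (w + c) := by
  have : intDiff (v + c) (w + c) = intDiff v w := by
    funext j
    simp [intDiff]
  rwa [DiffIn, this]

lemma diffIn_symm {ι : Type*} {S : Set (ι → ℤ)} (hS : ∀ s ∈ S, -s ∈ S) {v w : ι → ℕ}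
    (h : DiffIn S v w) : DiffIn S w v := by
  have : intDiff w v = -intDiff v w := by
    funext j
    simp [intDiff]
  rw [DiffIn, this]
  exact hS _ h

lemma Matrix.mulVec_intDiff {κ ι : Type*} [Fintype ι] (A : Matrix κ ι ℤ) (v w : ι → ℕ) :
    A.mulVec (intDiff v w) = A.mulVec (fun j => (v j : ℤ)) - A.mulVec (fun j => (w j : ℤ)) :=
  Matrix.mulVec_sub _ _ _

section Monomials

variable {r : ℕ}

lemma xpow_add (a c : Fin r → ℕ) : xpow (a + c) = xpow a * xpow c := by
  simp [xpow, pow_add, Finset.prod_mul_distrib]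

lemma xpow_zero : xpow (0 : Fin r → ℕ) = 1 := by
  simp [xpow]

lemma xpow_eq_monomial (d : Fin r → ℕ) :
    xpow d = monomial (Finsupp.equivFunOnFinite.symm d) 1 := by
  rw [monomial_eq, C_1, one_mul, Finsupp.prod_fintype _ _ fun _ => pow_zero _]
  rfl

lemma prod_X_pow_eq_xpow (m : ℕ) : (∏ j, X j) ^ m = xpow (r := r) fun _ => m := by
  simp [xpow, Finset.prod_pow]

lemma eval_one_pderiv_xpow (j : Fin r) (d : Fin r → ℕ) :
    eval 1 (pderiv j (xpow d)) = d j := by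
  rw [xpow_eq_monomial, pderiv_monomial, eval_monomial]
  simp [Finsupp.prod]

lemma intDiff_posPart_negPart (c : Fin r → ℤ) : intDiff (posPart c) (negPart c) = c := by
  funext j
  simp only [intDiff, _root_.posPart, _root_.negPart]
  omega

end Monomials

section BinomialLattice

variable {r : ℕ} (I : Ideal (MvPolynomial (Fin r) ℤ))

def binomialLattice : AddSubgroup (Fin r → ℤ) where
  carrier := {c | ∃ u v e, intDiff u v = c ∧ xpow e * (xpow u - xpow v) ∈ I}
  zero_mem' := ⟨0, 0, 0, by funext; simp [intDiff], by simp⟩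
  add_mem' := by
    rintro _ _ ⟨u₁, v₁, e₁, rfl, h₁⟩ ⟨u₂, v₂, e₂, rfl, h₂⟩
    refine ⟨u₁ + u₂, v₁ + v₂, e₁ + e₂, by funext; simp [intDiff]; ring, ?_⟩
    have key : xpow (e₁ + e₂) * (xpow (u₁ + u₂) - xpow (v₁ + v₂)) =
        xpow (e₂ + u₂) * (xpow e₁ * (xpow u₁ - xpow v₁)) +
          xpow (e₁ + v₁) * (xpow e₂ * (xpow u₂ - xpow v₂)) := by
      simp only [xpow_add]
      ring
    rw [key]
    exact add_mem (I.mul_mem_left _ h₁) (I.mul_mem_left _ h₂)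
  neg_mem' := by
    rintro _ ⟨u, v, e, rfl, h⟩
    refine ⟨v, u, e, by funext; simp [intDiff], ?_⟩
    rw [← neg_sub, mul_neg]
    exact I.neg_mem h

variable {I}

lemma intDiff_mem_binomialLattice {u v : Fin r → ℕ} (h : xpow u - xpow v ∈ I) :
    intDiff u v ∈ binomialLattice I :=
  ⟨u, v, 0, rfl, by rwa [xpow_zero, one_mul]⟩

/-- Membership is witnessed by every pair of exponents with the given difference, not only by
some pair. -/
lemma exists_xpow_mul_mem_of_intDiff_mem {u v : Fin r → ℕ}
    (h : intDiff u v ∈ binomialLattice I) : ∃ e, xpow e * (xpow u - xpow v) ∈ I := by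
  obtain ⟨u', v', e, huv, hI⟩ := h
  have hsum : u + v' = u' + v := by
    funext j
    have := congrFun huv j
    simp only [intDiff] at this
    simp only [Pi.add_apply]
    omega
  refine ⟨e + v', ?_⟩
  have key : xpow (e + v') * (xpow u - xpow v) = xpow v * (xpow e * (xpow u' - xpow v')) := by
    rw [xpow_add, mul_assoc, mul_sub, ← xpow_add, ← xpow_add, add_comm v' u, hsum,
      add_comm v' v, xpow_add, xpow_add]
    ring
  rw [key]
  exact I.mul_mem_left _ hI

lemma exists_mul_prod_X_pow_mem {e : Fin r → ℕ} {f : MvPolynomial (Fin r) ℤ}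
    (h : xpow e * f ∈ I) : ∃ m, 0 < m ∧ f * (∏ j, X j) ^ m ∈ I := by
  refine ⟨∑ j, e j + 1, Nat.succ_pos _, ?_⟩
  have hsplit : (fun _ => ∑ j, e j + 1) = e + fun j => ∑ j, e j + 1 - e j := by
    funext j
    have := Finset.single_le_sum (fun j _ => Nat.zero_le (e j)) (Finset.mem_univ j)
    simp only [Pi.add_apply]
    omega
  rw [prod_X_pow_eq_xpow, hsplit, xpow_add, mul_comm f, mul_comm (xpow e), mul_assoc]
  exact I.mul_mem_left _ h

end BinomialLattice

/-- The functional `f ↦ (∂f/∂xⱼ)(1, …, 1)` sends `x^d` to `dⱼ`, so it reads off exponent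
differences from a binomial identity. -/
lemma intDiff_eq_sum_of_xpow_sub_eq {r N : ℕ} {p q : Fin r → ℕ} (ε : Fin N → ℤ)
    (m u v : Fin N → Fin r → ℕ)
    (h : xpow p - xpow q = ∑ i, C (ε i) * xpow (m i) * (xpow (u i) - xpow (v i))) :
    intDiff p q = ∑ i, ε i • intDiff (u i) (v i) := by
  funext j
  have hj := congrArg (fun f => eval 1 (pderiv j f)) h
  have hterm (i : Fin N) : C (ε i) * xpow (m i) * (xpow (u i) - xpow (v i)) =
      C (ε i) * (xpow (m i + u i) - xpow (m i + v i)) := by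
    rw [xpow_add, xpow_add]
    ring
  simp only [hterm, map_sub, map_sum, pderiv_C_mul, map_mul, eval_C,
    eval_one_pderiv_xpow] at hj
  simp only [intDiff, Finset.sum_apply, Pi.smul_apply, smul_eq_mul, hj, Pi.add_apply]
  push_cast
  exact Finset.sum_congr rfl fun i _ => by ring

def boundedCombinations {ι : Type*} {n : ℕ} (b : Fin n → ι → ℤ) (N : ℕ) : Set (ι → ℤ) :=
  {s | ∃ a : Fin n → ℤ, ∑ i, |a i| ≤ (N : ℤ) ∧ s = ∑ i, a i • b i}

section BoundedCombinations

variable {ι : Type*} {n : ℕ} {b : Fin n → ι → ℤ} {N : ℕ}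

lemma neg_mem_boundedCombinations {s : ι → ℤ} (hs : s ∈ boundedCombinations b N) :
    -s ∈ boundedCombinations b N := by
  obtain ⟨a, ha, rfl⟩ := hs
  exact ⟨-a, by simpa using ha, by simp [Finset.sum_neg_distrib]⟩

lemma sum_smul_comp_mem_boundedCombinations (ε : Fin N → ℤ) (hε : ∀ i, |ε i| ≤ 1)
    (idx : Fin N → Fin n) : ∑ i, ε i • b (idx i) ∈ boundedCombinations b N := by
  refine ⟨fun t => ∑ i : {i // idx i = t}, ε i, ?_, ?_⟩
  · calc ∑ t, |∑ i : {i // idx i = t}, ε i|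
        ≤ ∑ t, ∑ i : {i // idx i = t}, |ε i| :=
          Finset.sum_le_sum fun t _ => Finset.abs_sum_le_sum_abs _ _
      _ = ∑ i, |ε i| := Fintype.sum_fiberwise idx fun i => |ε i|
      _ ≤ ∑ _ : Fin N, 1 := Finset.sum_le_sum fun i _ => hε i
      _ = N := by simp
  · simp only [Finset.sum_smul]
    rw [← Fintype.sum_fiberwise idx]
    refine Finset.sum_congr rfl fun t _ => Finset.sum_congr rfl fun i _ => ?_
    rw [i.2]

lemma mulVec_eq_zero_of_mem_boundedCombinations {κ : Type*} [Fintype ι]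
    {A : Matrix κ ι ℤ} (hker : ∀ i, A.mulVec (b i) = 0) {s : ι → ℤ}
    (hs : s ∈ boundedCombinations b N) : A.mulVec s = 0 := by
  obtain ⟨a, -, rfl⟩ := hs
  simp only [Matrix.mulVec_sum, Matrix.mulVec_smul, hker, smul_zero, Finset.sum_const_zero]

end BoundedCombinations

lemma intDiff_mem_boundedCombinations_of_xpow_sub_eq {r n N : ℕ} {b : Fin n → Fin r → ℤ}
    {p q : Fin r → ℕ} (ε : Fin N → ℤ) (hε : ∀ i, ε i = -1 ∨ ε i = 0 ∨ ε i = 1)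
    (m : Fin N → Fin r → ℕ) (idx : Fin N → Fin n)
    (h : xpow p - xpow q = ∑ i, C (ε i) * xpow (m i) *
      (xpow (posPart (b (idx i))) - xpow (negPart (b (idx i))))) :
    intDiff p q ∈ boundedCombinations b N := by
  rw [intDiff_eq_sum_of_xpow_sub_eq ε m _ _ h]
  simp only [intDiff_posPart_negPart]
  exact sum_smul_comp_mem_boundedCombinations ε
    (fun i => by rcases hε i with h | h | h <;> simp [h]) idx

theorem AddCon.rel_of_xpow_sub_mem_span {r : ℕ} (c : AddCon (Fin r → ℕ))
    {G : Set (MvPolynomial (Fin r) ℤ)} (hG : ∀ g ∈ G, ∃ p q, c p q ∧ g = xpow p - xpow q)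
    {v w : Fin r → ℕ} (h : xpow v - xpow w ∈ Ideal.span G) : c v w := by
  let f : (Fin r →₀ ℕ) →+ c.Quotient :=
    c.mk'.comp (Finsupp.linearEquivFunOnFinite ℕ ℕ (Fin r)).toAddMonoidHom
  refine c.eq.1 (f.eq_of_monomial_sub_mem_span (fun g hg => ?_)
    (by simpa only [xpow_eq_monomial] using h))
  obtain ⟨p, q, hpq, rfl⟩ := hG g hg
  exact ⟨_, _, c.eq.2 hpq, by rw [xpow_eq_monomial, xpow_eq_monomial]⟩

theorem stmt19_general (k r n N : ℕ) (A : Matrix (Fin k) (Fin r) ℤ)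
    (b : Fin n → (Fin r → ℤ))
    (hker : ∀ i, A.mulVec (b i) = 0)
    (hgen : ∀ v : Fin r → ℤ, A.mulVec v = 0 → ∃ a : Fin n → ℤ, v = ∑ i, a i • b i)
    (hnorm : ∃ G : Set (MvPolynomial (Fin r) ℤ),
      {x : MvPolynomial (Fin r) ℤ | ∃ m : ℕ, 0 < m ∧ x * (∏ j, X j) ^ m ∈
          Ideal.span (Set.range fun i : Fin n =>
            xpow (posPart (b i)) - xpow (negPart (b i)))}
        = (Ideal.span G : Set (MvPolynomial (Fin r) ℤ)) ∧
      ∀ g ∈ G, (∃ p q : Fin r → ℕ, g = xpow p - xpow q) ∧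
        ∃ (ε : Fin N → ℤ) (m : Fin N → (Fin r → ℕ)) (idx : Fin N → Fin n),
          (∀ i, ε i = -1 ∨ ε i = 0 ∨ ε i = 1) ∧
          g = ∑ i, C (ε i) * xpow (m i) *
            (xpow (posPart (b (idx i))) - xpow (negPart (b (idx i))))) :
    ∀ u : Fin r → ℕ,
      let F : Set (Fin r → ℕ) :=
        {v | A.mulVec (fun i => (v i : ℤ)) = A.mulVec (fun i => (u i : ℤ))}
      let Adj : (Fin r → ℕ) → (Fin r → ℕ) → Prop := fun v w =>
        v ∈ F ∧ w ∈ F ∧ v ≠ w ∧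
          ∃ a : Fin n → ℤ, (∑ i, |a i|) ≤ (N : ℤ) ∧
            (fun j => (v j : ℤ) - (w j : ℤ)) = ∑ i, a i • b i
      ∀ v ∈ F, ∀ w ∈ F, Relation.ReflTransGen Adj v w := by
  intro u F Adj v hv w hw
  obtain ⟨G, hsat, hG⟩ := hnorm
  set I := Ideal.span (Set.range fun i => xpow (posPart (b i)) - xpow (negPart (b i)))
  have hb (i : Fin n) : b i ∈ binomialLattice I := by
    simpa only [intDiff_posPart_negPart] using
      intDiff_mem_binomialLattice (I := I) (Ideal.subset_span ⟨i, rfl⟩)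
  have hvw : xpow v - xpow w ∈ Ideal.span G := by
    obtain ⟨a, ha⟩ := hgen (intDiff v w) (by rw [A.mulVec_intDiff, hv, hw, sub_self])
    have hdiff : intDiff v w ∈ binomialLattice I :=
      ha ▸ sum_mem fun i _ => zsmul_mem (hb i) (a i)
    obtain ⟨e, he⟩ := exists_xpow_mul_mem_of_intDiff_mem hdiff
    rw [← SetLike.mem_coe, ← hsat]
    exact exists_mul_prod_X_pow_mem he
  let c := AddCon.reflTransGen (DiffIn (boundedCombinations b N))
    (fun _ _ => diffIn_symm fun _ => neg_mem_boundedCombinations) (fun _ _ => diffIn_add_right)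
  have hGc : ∀ g ∈ G, ∃ p q, c p q ∧ g = xpow p - xpow q := by
    intro g hg
    obtain ⟨⟨p, q, rfl⟩, ε, m, idx, hε, hg⟩ := hG g hg
    exact ⟨p, q, .single (intDiff_mem_boundedCombinations_of_xpow_sub_eq ε hε m idx hg), rfl⟩
  refine (c.rel_of_xpow_sub_mem_span hGc hvw).restrict (fun x y hxy hx => ?_) hv
  have hxy : A.mulVec (intDiff x y) = 0 := mulVec_eq_zero_of_mem_boundedCombinations hker hxy
  rw [A.mulVec_intDiff, sub_eq_zero] at hxy
  exact hxy.symm.trans hx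

/-- If `B = {b₁,…,bₙ}` is a basis of the integral kernel of `A` and `B` has norm
`N` (the saturation of `I_B` with respect to `x₁⋯x_r` is generated by pure
difference binomials each expressible as a signed sum of `N` monomial multiples of
the generators), then for every `u ∈ ℕ^r` the graph on the fibre `F(u)`, with an
edge between `v₁, v₂` iff `v₁ - v₂ = Σ aᵢ bᵢ` with `Σ |aᵢ| ≤ N`, is connected. -/
theorem stmt19 (k r n N : ℕ) (hN : 1 ≤ N) (A : Matrix (Fin k) (Fin r) ℤ)
    (b : Fin n → (Fin r → ℤ))
    (hker : ∀ i, A.mulVec (b i) = 0)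
    (hgen : ∀ v : Fin r → ℤ, A.mulVec v = 0 → ∃ a : Fin n → ℤ, v = ∑ i, a i • b i)
    (hind : ∀ a : Fin n → ℤ, ∑ i, a i • b i = 0 → a = 0)
    (hnorm : ∃ G : Set (MvPolynomial (Fin r) ℤ),
      {x : MvPolynomial (Fin r) ℤ | ∃ m : ℕ, 0 < m ∧ x * (∏ j, X j) ^ m ∈
          Ideal.span (Set.range fun i : Fin n =>
            xpow (posPart (b i)) - xpow (negPart (b i)))}
        = (Ideal.span G : Set (MvPolynomial (Fin r) ℤ)) ∧
      ∀ g ∈ G, (∃ p q : Fin r → ℕ, g = xpow p - xpow q) ∧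
        ∃ (ε : Fin N → ℤ) (m : Fin N → (Fin r → ℕ)) (idx : Fin N → Fin n),
          (∀ i, ε i = -1 ∨ ε i = 0 ∨ ε i = 1) ∧
          g = ∑ i, C (ε i) * xpow (m i) *
            (xpow (posPart (b (idx i))) - xpow (negPart (b (idx i))))) :
    ∀ u : Fin r → ℕ,
      let F : Set (Fin r → ℕ) :=
        {v | A.mulVec (fun i => (v i : ℤ)) = A.mulVec (fun i => (u i : ℤ))}
      let Adj : (Fin r → ℕ) → (Fin r → ℕ) → Prop := fun v w =>
        v ∈ F ∧ w ∈ F ∧ v ≠ w ∧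
          ∃ a : Fin n → ℤ, (∑ i, |a i|) ≤ (N : ℤ) ∧
            (fun j => (v j : ℤ) - (w j : ℤ)) = ∑ i, a i • b i
      ∀ v ∈ F, ∀ w ∈ F, Relation.ReflTransGen Adj v w :=
  stmt19_general k r n N A b hker hgen hnorm
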